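/- Let m be a natural number. For every z in the open unit disk D, the function f(z) = conj(z)^m·(1 − |z|²)^{−m} satisfies ∂f(z) − conj(z)²·∂̄f(z) = 0. -/

import Mathlib

open Complex

/-- The Wirtinger derivative `∂f(z) = (1/2)(L(1) − i·L(i))`, `L = fderiv ℝ f z`. -/
noncomputable def wirtingerD (f : ℂ → ℂ) (z : ℂ) : ℂ :=
  (1 / 2) * ((fderiv ℝ f z) 1 - Complex.I * (fderiv ℝ f z) Complex.I)

/-- The Wirtinger derivative `∂̄f(z) = (1/2)(L(1) + i·L(i))`, `L = fderiv ℝ f z`. -/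
noncomputable def wirtingerBar (f : ℂ → ℂ) (z : ℂ) : ℂ :=
  (1 / 2) * ((fderiv ℝ f z) 1 + Complex.I * (fderiv ℝ f z) Complex.I)

/-- The highest weight vector `f(z) = conj(z)^m·(1−|z|²)^{−m}` satisfies
`∂f(z) − conj(z)²·∂̄f(z) = 0` on the open unit disk. -/
theorem highestWeightVector_annihilated_unitDisk (m : ℕ) (z : ℂ)
    (hz : z ∈ Metric.ball (0 : ℂ) 1) :
    wirtingerD (fun w : ℂ => ((starRingEnd ℂ) w) ^ m * ((1 - ‖w‖ ^ 2 : ℝ) : ℂ) ^ (-(m : ℤ))) z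
      - ((starRingEnd ℂ) z) ^ 2
        * wirtingerBar
            (fun w : ℂ => ((starRingEnd ℂ) w) ^ m * ((1 - ‖w‖ ^ 2 : ℝ) : ℂ) ^ (-(m : ℤ))) z
      = 0 := by
  have hcast : ∀ w : ℂ, ((1 - ‖w‖ ^ 2 : ℝ) : ℂ) = 1 - w * (starRingEnd ℂ) w := by
    intro w
    push_cast
    rw [Complex.mul_conj, Complex.normSq_eq_norm_sq]
    norm_cast
  simp only [hcast]
  rcases m with _ | k
  · simp [wirtingerD, wirtingerBar]
  set m := k + 1 with hm
  have hz1 : ‖z‖ < 1 := by simpa using hz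
  set a := (starRingEnd ℂ) z with ha
  have hne : (1 : ℂ) - z * a ≠ 0 := by
    rw [ha, Complex.mul_conj]
    intro h
    have : Complex.normSq z < 1 := by
      rw [Complex.normSq_eq_norm_sq]
      calc ‖z‖ ^ 2 = ‖z‖ ^ 2 := rfl
        _ < 1 := by nlinarith [norm_nonneg z]
    rw [sub_eq_zero] at h
    rw [← Complex.ofReal_one] at h
    have := Complex.ofReal_injective h.symm
    linarith
  have hconj : HasFDerivAt (fun w : ℂ => (starRingEnd ℂ) w)
      Complex.conjCLE.toContinuousLinearMap z := Complex.conjCLE.hasFDerivAt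
  have hmul : HasFDerivAt (fun w : ℂ => w * (starRingEnd ℂ) w)
      (z • Complex.conjCLE.toContinuousLinearMap + a • ContinuousLinearMap.id ℝ ℂ) z :=
    (hasFDerivAt_id z).mul hconj
  have hu : HasFDerivAt (fun w : ℂ => 1 - w * (starRingEnd ℂ) w)
      (-(z • Complex.conjCLE.toContinuousLinearMap + a • ContinuousLinearMap.id ℝ ℂ)) z :=
    hmul.const_sub 1
  have hzpow : HasFDerivAt (fun w : ℂ => (1 - w * (starRingEnd ℂ) w) ^ (-(m : ℤ)))
      ((((1 : ℂ →L[ℂ] ℂ).smulRight ((↑(-(m:ℤ)) : ℂ) * (1 - z * a) ^ ((-(m:ℤ)) - 1))).restrictScalars ℝ).comp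
        (-(z • Complex.conjCLE.toContinuousLinearMap + a • ContinuousLinearMap.id ℝ ℂ))) z := by
    have hd := (hasDerivAt_zpow (-(m : ℤ)) ((1:ℂ) - z * a) (Or.inl hne)).hasFDerivAt
    exact (hd.restrictScalars ℝ).comp z hu
  have hpow : HasFDerivAt (fun w : ℂ => ((starRingEnd ℂ) w) ^ m)
      ((((1 : ℂ →L[ℂ] ℂ).smulRight ((m : ℂ) * a ^ (m - 1))).restrictScalars ℝ).comp
        Complex.conjCLE.toContinuousLinearMap) z := by
    have hd := (hasDerivAt_pow m a).hasFDerivAt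
    exact (hd.restrictScalars ℝ).comp z hconj
  have hf : HasFDerivAt (fun w : ℂ => (starRingEnd ℂ) w ^ m * (1 - w * (starRingEnd ℂ) w) ^ (-(m:ℤ))) _ z :=
    hpow.mul hzpow
  rw [wirtingerD, wirtingerBar, hf.fderiv]
  simp only [ContinuousLinearMap.add_apply, ContinuousLinearMap.smul_apply,
    ContinuousLinearMap.comp_apply, ContinuousLinearMap.coe_restrictScalars',
    ContinuousLinearMap.smulRight_apply, ContinuousLinearMap.one_apply,
    ContinuousLinearMap.neg_apply, ContinuousLinearMap.id_apply,
    ContinuousLinearEquiv.coe_coe, Complex.conjCLE_apply, map_one, Complex.conj_I,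
    smul_eq_mul, ← ha]
  have hz2 : ((-(m:ℤ)) : ℤ) - 1 = -(((m+1 : ℕ) :ℤ)) := by push_cast; ring
  rw [hz2]
  rw [zpow_neg, zpow_neg, zpow_natCast, zpow_natCast]
  field_simp
  ring_nf
  simp only [Complex.I_sq]
  simp only [hm, Nat.add_sub_cancel]
  push_cast
  ring
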